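/- For n ≥ 2 and f(x_0,...,x_{n-1}) = x_t · x_{t+1} · ... · x_{n-1} with 0 ≤ t < n over F_2, the only fixed points of the state map of f are the all-zero state 0^n and the all-ones state 1^n, and every state eventually reaches one of these two fixed points under iteration of the state map. -/

import Mathlib

/-- The state map of an `n`-stage FSR with feedback function `f`. -/
def stateMap (n : ℕ) (f : (Fin n → ZMod 2) → ZMod 2) (x : Fin n → ZMod 2) :
    Fin n → ZMod 2 :=
  fun i => if h : (i : ℕ) + 1 < n then x ⟨(i : ℕ) + 1, h⟩ else f x

/-!
The state map shifts the register and appends `f x`, so every trajectory is read off one bit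
sequence `a` with `a (m + n) = ∏_{t ≤ q < n} a (m + q)`. A zero at some index `j ≥ t` is copied
to index `j + (n - t)` and from then on keeps reappearing in the window, so `a` is eventually
zero; if there is no such zero, `a` is constantly one from index `t` on. Either way the state,
which is a window of length `n` of `a`, becomes constant. A fixed point is constant since the
shift leaves it unchanged.
-/

lemma zmod_two_eq_zero_or_one (c : ZMod 2) : c = 0 ∨ c = 1 := by
  revert c; decide

section ShiftRegister

variable {n : ℕ} (f : (Fin n → ZMod 2) → ZMod 2)

lemma stateMap_apply_of_succ_lt (x : Fin n → ZMod 2) {i : ℕ} (h : i + 1 < n) :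
    stateMap n f x ⟨i, by omega⟩ = x ⟨i + 1, h⟩ :=
  dif_pos h

lemma stateMap_apply_last (x : Fin n → ZMod 2) (h : n - 1 < n) :
    stateMap n f x ⟨n - 1, h⟩ = f x :=
  dif_neg (show ¬n - 1 + 1 < n by omega)

lemma stateMap_const {c : ZMod 2} (hc : f (fun _ => c) = c) :
    stateMap n f (fun _ => c) = fun _ => c := by
  funext i
  unfold stateMap
  split <;> simp [hc]

def outputSeq (hn : 0 < n) (x : Fin n → ZMod 2) (m : ℕ) : ZMod 2 :=
  (stateMap n f)^[m] x ⟨0, hn⟩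

lemma iterate_stateMap_apply (x : Fin n → ZMod 2) (k : ℕ) {i : ℕ} (hi : i < n) :
    (stateMap n f)^[k] x ⟨i, hi⟩ = outputSeq f (by omega) x (k + i) := by
  induction i generalizing k with
  | zero => rfl
  | succ i ih =>
    rw [← stateMap_apply_of_succ_lt f ((stateMap n f)^[k] x) hi, ← Function.iterate_succ_apply' (stateMap n f),
      ih (k + 1) (by omega), Nat.add_assoc, Nat.add_comm 1 i]

lemma outputSeq_add_self (hn : 0 < n) (x : Fin n → ZMod 2) (m : ℕ) :
    outputSeq f hn x (m + n) = f ((stateMap n f)^[m] x) := by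
  rw [← stateMap_apply_last f _ (by omega), ← Function.iterate_succ_apply' (stateMap n f),
    iterate_stateMap_apply]
  congr 1
  omega

lemma iterate_stateMap_eq_const (hn : 0 < n) {x : Fin n → ZMod 2} {k : ℕ} {c : ZMod 2}
    (h : ∀ j ≥ k, outputSeq f hn x j = c) : (stateMap n f)^[k] x = fun _ => c := by
  funext i
  exact (iterate_stateMap_apply f x k i.isLt).trans (h _ (Nat.le_add_right k i))

lemma eq_const_of_stateMap_eq_self (hn : 0 < n) {x : Fin n → ZMod 2}
    (hx : stateMap n f x = x) : x = fun _ => x ⟨0, hn⟩ := by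
  funext i
  have := iterate_stateMap_apply f x 0 i.isLt
  rwa [Function.iterate_fixed hx, outputSeq, Function.iterate_fixed hx] at this

end ShiftRegister

section TailProduct

variable {n t : ℕ}

def tailProd (n t : ℕ) (x : Fin n → ZMod 2) : ZMod 2 :=
  ∏ i : Fin n, if t ≤ (i : ℕ) then x i else 1

lemma tailProd_eq_zero {x : Fin n → ZMod 2} {j : Fin n} (hj : t ≤ j) (hx : x j = 0) :
    tailProd n t x = 0 :=
  Finset.prod_eq_zero (Finset.mem_univ j) (by simp [hj, hx])

lemma tailProd_const_zero (ht : t < n) : tailProd n t (fun _ => 0) = 0 :=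
  tailProd_eq_zero (j := ⟨t, ht⟩) le_rfl rfl

lemma tailProd_const_one : tailProd n t (fun _ => 1) = 1 := by
  simp [tailProd]

lemma outputSeq_tailProd_add_self_eq_zero (hn : 0 < n) (x : Fin n → ZMod 2) {m q : ℕ}
    (htq : t ≤ q) (hq : q < n) (h : outputSeq (tailProd n t) hn x (m + q) = 0) :
    outputSeq (tailProd n t) hn x (m + n) = 0 := by
  rw [outputSeq_add_self]
  exact tailProd_eq_zero (j := ⟨q, hq⟩) htq ((iterate_stateMap_apply _ x m hq).trans h)

/-- The window `[m + t, m + n)` determining `a (m + n)` always contains the previous zero. -/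
lemma outputSeq_tailProd_eventually_zero (ht : t < n) (x : Fin n → ZMod 2) {j : ℕ}
    (htj : t ≤ j) (hj : outputSeq (tailProd n t) (by omega) x j = 0) :
    ∀ m ≥ j + (n - t), outputSeq (tailProd n t) (by omega) x m = 0 := by
  intro m hm
  induction m, hm using Nat.le_induction with
  | base =>
    have hm : j + (n - t) = (j - t) + n := by omega
    rw [hm]
    exact outputSeq_tailProd_add_self_eq_zero _ x le_rfl ht (by rwa [Nat.sub_add_cancel htj])
  | succ m hm ih =>
    have hm' : m + 1 = (m + 1 - n) + n := by omega
    rw [hm']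
    exact outputSeq_tailProd_add_self_eq_zero _ x (q := n - 1) (by omega) (by omega)
      (by rwa [show m + 1 - n + (n - 1) = m by omega])

end TailProduct

theorem stmt8_general (n t : ℕ) (ht : t < n) :
    let f : (Fin n → ZMod 2) → ZMod 2 :=
      fun x => ∏ i : Fin n, (if t ≤ (i : ℕ) then x i else 1)
    -- the only fixed points of the state map are 0^n and 1^n
    (∀ x : Fin n → ZMod 2,
      stateMap n f x = x ↔ (x = fun _ => 0) ∨ (x = fun _ => 1)) ∧
    -- every state eventually reaches one of the two fixed points
    (∀ x : Fin n → ZMod 2, ∃ k : ℕ,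
      (stateMap n f)^[k] x = (fun _ => 0) ∨ (stateMap n f)^[k] x = (fun _ => 1)) := by
  show (∀ x, stateMap n (tailProd n t) x = x ↔ _) ∧ ∀ x, ∃ k, _
  have hn : 0 < n := by omega
  refine ⟨fun x => ⟨fun hx => ?_, ?_⟩, fun x => ?_⟩
  · rw [eq_const_of_stateMap_eq_self _ hn hx]
    rcases zmod_two_eq_zero_or_one (x ⟨0, hn⟩) with h | h <;> simp [h]
  · rintro (rfl | rfl)
    exacts [stateMap_const _ (tailProd_const_zero ht), stateMap_const _ tailProd_const_one]
  · by_cases hone : ∀ j ≥ t, outputSeq (tailProd n t) hn x j = 1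
    · exact ⟨t, Or.inr (iterate_stateMap_eq_const _ hn hone)⟩
    · push Not at hone
      obtain ⟨j, htj, hj⟩ := hone
      have hzero := (zmod_two_eq_zero_or_one _).resolve_right hj
      exact ⟨j + (n - t), Or.inl (iterate_stateMap_eq_const _ hn
        (outputSeq_tailProd_eventually_zero ht x htj hzero))⟩

theorem stmt8 (n t : ℕ) (hn : 2 ≤ n) (ht : t < n) :
    let f : (Fin n → ZMod 2) → ZMod 2 :=
      fun x => ∏ i : Fin n, (if t ≤ (i : ℕ) then x i else 1)
    -- the only fixed points of the state map are 0^n and 1^n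
    (∀ x : Fin n → ZMod 2,
      stateMap n f x = x ↔ (x = fun _ => 0) ∨ (x = fun _ => 1)) ∧
    -- every state eventually reaches one of the two fixed points
    (∀ x : Fin n → ZMod 2, ∃ k : ℕ,
      (stateMap n f)^[k] x = (fun _ => 0) ∨ (stateMap n f)^[k] x = (fun _ => 1)) :=
  stmt8_general n t ht
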